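/- arXiv:math/0112216 — 2 statements merged into one kernel-verified Lean document; each statement's English description precedes it below -/
import Mathlib

section
/- The map sending a word π ∈ W_t to the pair (H_π, O_π) — its position graph and induced acyclic orientation — descends to a well-defined injection from W_t / ~_{Ḡ} into the set of pairs (graph H on t positions, acyclic orientation of H) of the form (H_π, O_π); moreover this map is a bijection onto its image with explicit inverse given by reading off a topological ordering of the acyclic orientation. -/
/-- One step of the word rewriting: swap two adjacent letters that are equal or joined
by an edge of `G`. -/
def SwapRel {n t : ℕ} (G : SimpleGraph (Fin n)) (w w' : Fin t → Fin n) : Prop :=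
  ∃ k k' : Fin t, (k : ℕ) + 1 = (k' : ℕ) ∧
    (w k = w k' ∨ G.Adj (w k) (w k')) ∧ w' = w ∘ Equiv.swap k k'

/-- Edge of `H_w`: positions `a, b` carry distinct letters adjacent in the complement
of `G`. -/
def Hedge {n t : ℕ} (G : SimpleGraph (Fin n)) (w : Fin t → Fin n) (a b : Fin t) : Prop :=
  w a ≠ w b ∧ ¬ G.Adj (w a) (w b)

namespace Stmt16

variable {n t : ℕ} {G : SimpleGraph (Fin n)}

lemma hedge_symm {w : Fin t → Fin n} {a b : Fin t} (h : Hedge G w a b) : Hedge G w b a :=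
  ⟨h.1.symm, fun hadj => h.2 hadj.symm⟩

lemma not_hedge {w : Fin t → Fin n} {a b : Fin t} (h : w a = w b ∨ G.Adj (w a) (w b)) :
    ¬ Hedge G w a b := by
  rintro ⟨h1, h2⟩; rcases h with h | h
  · exact h1 h
  · exact h2 h

lemma swap_lt_iff {k k' a b : Fin t} (hk : (k:ℕ)+1 = (k':ℕ))
    (h1 : ¬(a = k ∧ b = k')) (h2 : ¬(a = k' ∧ b = k)) :
    Equiv.swap k k' a < Equiv.swap k k' b ↔ a < b := by
  simp only [Fin.ext_iff, not_and] at h1 h2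
  simp only [Equiv.swap_apply_def]
  split_ifs <;> simp only [Fin.ext_iff, Fin.lt_def] at * <;> omega

/-- Key order lemma: if the letters at adjacent positions `k, k'` are equal or adjacent
in `G`, then for positions whose swapped images carry an `H`-edge, the swap preserves
the order relation. -/
lemma key {w : Fin t → Fin n} {k k' : Fin t} (hk : (k:ℕ)+1 = (k':ℕ))
    (hok : w k = w k' ∨ G.Adj (w k) (w k')) {a b : Fin t}
    (hH : Hedge G w (Equiv.swap k k' a) (Equiv.swap k k' b)) :
    a < b ↔ Equiv.swap k k' a < Equiv.swap k k' b := by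
  by_cases h1 : a = k ∧ b = k'
  · exfalso
    rw [h1.1, h1.2, Equiv.swap_apply_left, Equiv.swap_apply_right] at hH
    exact not_hedge hok (hedge_symm hH)
  by_cases h2 : a = k' ∧ b = k
  · exfalso
    rw [h2.1, h2.2, Equiv.swap_apply_left, Equiv.swap_apply_right] at hH
    exact not_hedge hok hH
  · exact (swap_lt_iff hk h1 h2).symm

/-- The set of inversions of a permutation of positions. -/
def invs (σ : Equiv.Perm (Fin t)) : Finset (Fin t × Fin t) :=
  Finset.univ.filter fun p => p.1 < p.2 ∧ σ p.2 < σ p.1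

lemma eq_one_of_invs_empty {σ : Equiv.Perm (Fin t)} (h : invs σ = ∅) : σ = 1 := by
  have hsm : StrictMono (⇑σ) := by
    intro x y hxy
    rcases lt_trichotomy (σ x) (σ y) with h' | h' | h'
    · exact h'
    · exact absurd (σ.injective h') (ne_of_lt hxy)
    · exfalso
      have : (x, y) ∈ invs σ := by
        simp [invs, hxy, h']
      rw [h] at this; exact absurd this (Finset.notMem_empty _)
  have hwf : WellFoundedLT (Fin t) := inferInstance
  have h2 : ⇑σ = id := by
    refine (@StrictMono.range_inj (Fin t) (Fin t) _ _ hwf (⇑σ) id hsm strictMono_id).1 ?_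
    rw [σ.surjective.range_eq, Set.range_id]
  ext x
  have := congrFun h2 x
  simp only [id_eq] at this
  simp [this]

lemma exists_adj_inv {σ : Equiv.Perm (Fin t)} (h : invs σ ≠ ∅) :
    ∃ k k' : Fin t, (k:ℕ)+1 = (k':ℕ) ∧ σ k' < σ k := by
  by_contra hc
  push_neg at hc
  apply h
  have step : ∀ k k' : Fin t, (k:ℕ)+1 = (k':ℕ) → σ k < σ k' := by
    intro k k' hkk'
    have hne : k ≠ k' := by intro he; rw [he] at hkk'; omega
    rcases lt_trichotomy (σ k) (σ k') with h' | h' | h'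
    · exact h'
    · exact absurd (σ.injective h') hne
    · exact absurd h' (not_lt_of_ge (hc k k' hkk'))
  have mono : ∀ d : ℕ, ∀ i j : Fin t, (j:ℕ) = (i:ℕ) + d + 1 → σ i < σ j := by
    intro d
    induction d with
    | zero => intro i j hij; exact step i j (by omega)
    | succ d ih =>
        intro i j hij
        have hj : (j:ℕ) - 1 < t := by omega
        have h1 : σ i < σ ⟨(j:ℕ)-1, hj⟩ := ih i _ (by simp; omega)
        have h2 : σ ⟨(j:ℕ)-1, hj⟩ < σ j := step _ j (by simp; omega)
        exact h1.trans h2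
  rw [Finset.eq_empty_iff_forall_notMem]
  rintro ⟨x, y⟩ hm
  simp only [invs, Finset.mem_filter, Finset.mem_univ, true_and] at hm
  have : σ x < σ y := mono ((y:ℕ) - (x:ℕ) - 1) x y (by have := hm.1; rw [Fin.lt_def] at this; omega)
  exact absurd hm.2 (not_lt_of_gt this)

lemma invs_card_lt {σ : Equiv.Perm (Fin t)} {k k' : Fin t} (hk : (k:ℕ)+1 = (k':ℕ))
    (hinv : σ k' < σ k) :
    (invs (σ * Equiv.swap k k')).card < (invs σ).card := by
  set s := Equiv.swap k k' with hs
  have hklt : k < k' := by rw [Fin.lt_def]; omega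
  have hmain : (invs (σ * s)).card ≤ ((invs σ).erase (k, k')).card := by
    apply Finset.card_le_card_of_injOn (fun p => (s p.1, s p.2))
    · rintro ⟨x, y⟩ hm
      rw [Finset.mem_coe, invs, Finset.mem_filter] at hm
      simp only [Finset.mem_univ, true_and, Equiv.Perm.mul_apply] at hm
      have h1 : ¬(x = k ∧ y = k') := by
        rintro ⟨rfl, rfl⟩
        rw [hs, Equiv.swap_apply_left, Equiv.swap_apply_right] at hm
        exact absurd hm.2 (not_lt_of_gt hinv)
      have h2 : ¬(x = k' ∧ y = k) := by
        rintro ⟨rfl, rfl⟩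
        exact absurd hm.1 (not_lt_of_gt hklt)
      have hxy : s x < s y := by
        rw [hs]
        exact (swap_lt_iff hk h1 h2).2 hm.1
      have hmem : (s x, s y) ∈ invs σ := by
        simp only [invs, Finset.mem_filter, Finset.mem_univ, true_and]
        exact ⟨hxy, hm.2⟩
      refine Finset.mem_erase.2 ⟨?_, hmem⟩
      intro he
      have hx : s x = k := (Prod.ext_iff.1 he).1
      have hy : s y = k' := (Prod.ext_iff.1 he).2
      have hx' : x = s k := by rw [← hx, hs, Equiv.swap_apply_self]
      have hy' : y = s k' := by rw [← hy, hs, Equiv.swap_apply_self]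
      rw [hs, Equiv.swap_apply_left] at hx'
      rw [hs, Equiv.swap_apply_right] at hy'
      rw [hx', hy'] at hm
      exact absurd hm.1 (not_lt_of_gt hklt)
    · rintro ⟨x, y⟩ _ ⟨x', y'⟩ _ he
      have h1 : s x = s x' := (Prod.ext_iff.1 he).1
      have h2 : s y = s y' := (Prod.ext_iff.1 he).2
      exact Prod.ext (s.injective h1) (s.injective h2)
  have hmem : (k, k') ∈ invs σ := by
    simp only [invs, Finset.mem_filter, Finset.mem_univ, true_and]
    exact ⟨hklt, hinv⟩
  calc (invs (σ * s)).card ≤ ((invs σ).erase (k, k')).card := hmain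
    _ < (invs σ).card := Finset.card_erase_lt_of_mem hmem

/-- The inverse construction: from a permutation matching occurrences and preserving the
orientation, build a chain of allowed swaps (induction on the number of inversions). -/
lemma back (G : SimpleGraph (Fin n)) (w : Fin t → Fin n) :
    ∀ N (σ : Equiv.Perm (Fin t)), (invs σ).card ≤ N →
    (∀ a b : Fin t, Hedge G w (σ a) (σ b) → (a < b ↔ σ a < σ b)) →
    Relation.EqvGen (SwapRel G) w (w ∘ σ) := by
  intro N
  induction N with
  | zero =>
    intro σ hcard _
    have hE : invs σ = ∅ := Finset.card_eq_zero.1 (Nat.le_zero.1 hcard)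
    have : w ∘ ⇑σ = w := by rw [eq_one_of_invs_empty hE]; ext x; simp
    rw [this]
    exact Relation.EqvGen.refl w
  | succ N ih =>
    intro σ hcard hcond
    by_cases hE : invs σ = ∅
    · have : w ∘ ⇑σ = w := by rw [eq_one_of_invs_empty hE]; ext x; simp
      rw [this]
      exact Relation.EqvGen.refl w
    · obtain ⟨k, k', hk, hinv⟩ := exists_adj_inv hE
      set s := Equiv.swap k k' with hs
      have hcard' : (invs (σ * s)).card ≤ N :=
        Nat.lt_succ_iff.1 (lt_of_lt_of_le (invs_card_lt hk hinv) hcard)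
      have hklt : k < k' := by rw [Fin.lt_def]; omega
      have hnH : ¬ Hedge G w (σ k) (σ k') := by
        intro hH
        exact absurd ((hcond k k' hH).1 hklt) (not_lt_of_gt hinv)
      have hok : w (σ k) = w (σ k') ∨ G.Adj (w (σ k)) (w (σ k')) := by
        by_contra hcon; push_neg at hcon; exact hnH ⟨hcon.1, hcon.2⟩
      have hcond' : ∀ a b : Fin t, Hedge G w ((σ * s) a) ((σ * s) b) →
          (a < b ↔ (σ * s) a < (σ * s) b) := by
        intro a b hH
        have hH' : Hedge G (w ∘ ⇑σ) (s a) (s b) := hH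
        have h1 : a < b ↔ s a < s b := key (w := w ∘ ⇑σ) hk hok hH'
        have h2 : s a < s b ↔ σ (s a) < σ (s b) := hcond (s a) (s b) hH
        simpa only [Equiv.Perm.mul_apply] using h1.trans h2
      have hIH : Relation.EqvGen (SwapRel G) w (w ∘ ⇑(σ * s)) := ih (σ * s) hcard' hcond'
      have hswap : SwapRel G (w ∘ ⇑(σ * s)) (w ∘ ⇑σ) := by
        refine ⟨k, k', hk, ?_, ?_⟩
        · have e1 : (w ∘ ⇑(σ * s)) k = w (σ k') := by
            simp [hs, Equiv.Perm.mul_apply]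
          have e2 : (w ∘ ⇑(σ * s)) k' = w (σ k) := by
            simp [hs, Equiv.Perm.mul_apply]
          rw [e1, e2]
          rcases hok with h | h
          · exact Or.inl h.symm
          · exact Or.inr h.symm
        · funext x
          simp only [Function.comp_apply, Equiv.Perm.mul_apply, hs, Equiv.swap_apply_self]
      exact Relation.EqvGen.trans _ _ _ hIH (Relation.EqvGen.rel _ _ hswap)

end Stmt16

/-- The map `π ↦ (H_π, O_π)` descends to a well-defined injection on `W_t / ~`, a
bijection onto its image: two words are equivalent under the relation generated by swaps
of adjacent letters that are equal or `G`-adjacent if and only if there is a bijection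
`σ` of positions matching occurrences (`w' = w ∘ σ`) and identifying the orientations
`O_{π'}` and `O_π` (edges of `H` oriented from the earlier occurrence to the later). -/
theorem stmt_16 (n t : ℕ) (G : SimpleGraph (Fin n)) (w w' : Fin t → Fin n) :
    Relation.EqvGen (SwapRel G) w w' ↔
      ∃ σ : Equiv.Perm (Fin t), w' = w ∘ σ ∧
        ∀ a b : Fin t,
          (Hedge G w' a b ∧ a < b) ↔ (Hedge G w (σ a) (σ b) ∧ σ a < σ b) := by
  constructor
  · intro h
    induction h with
    | rel x y hxy =>
        obtain ⟨k, k', hk, hok, hy⟩ := hxy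
        refine ⟨Equiv.swap k k', hy, ?_⟩
        intro a b
        subst hy
        constructor
        · rintro ⟨hH, hab⟩
          exact ⟨hH, (Stmt16.key hk hok hH).1 hab⟩
        · rintro ⟨hH, hlt⟩
          exact ⟨hH, (Stmt16.key hk hok hH).2 hlt⟩
    | refl x =>
        refine ⟨1, by funext z; simp, ?_⟩
        intro a b
        simp
    | symm x y _ ih =>
        obtain ⟨σ, hy, hcond⟩ := ih
        refine ⟨σ⁻¹, ?_, ?_⟩
        · subst hy; funext z; simp
        · intro a b
          have := (hcond (σ⁻¹ a) (σ⁻¹ b)).symm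
          simpa using this
    | trans x y z _ _ ih1 ih2 =>
        obtain ⟨σ, hy, hc1⟩ := ih1
        obtain ⟨τ, hz, hc2⟩ := ih2
        refine ⟨σ * τ, ?_, ?_⟩
        · subst hy hz; funext u; simp
        · intro a b
          have h2 := hc2 a b
          have h1 := hc1 (τ a) (τ b)
          simpa only [Equiv.Perm.mul_apply] using h2.trans h1
  · rintro ⟨σ, hw', hcond⟩
    subst hw'
    apply Stmt16.back G w (Stmt16.invs σ).card σ le_rfl
    intro a b hH
    constructor
    · intro hab
      exact ((hcond a b).1 ⟨hH, hab⟩).2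
    · intro hlt
      exact ((hcond a b).2 ⟨hH, hlt⟩).2
end

section
/- The upper bound on the number of composed systems is not sharp in general: for the system f = (f^1, f^2, f^3) on F_2^3 with f^1(x) = (x_2x_3, x_2, x_3), f^2(x) = (x_1, x_1x_3, x_3), f^3(x) = (x_1, x_2, 0), the dependency graph Φ(f) has no edges, the words π = (3,2,1) and π' = (3,1,2) are inequivalent under the relation generated by swaps of adjacent equal-or-G-adjacent letters, yet f^1 ∘ f^2 ∘ f^3 = f^2 ∘ f^1 ∘ f^3 (both equal the constant zero map). -/
/-- `h` does not depend on the `j`-th variable. -/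
def NotDep {n : ℕ} (h : (Fin n → ZMod 2) → ZMod 2) (j : Fin n) : Prop :=
  ∀ x x' : Fin n → ZMod 2, (∀ k, k ≠ j → x k = x' k) → h x = h x'

/-- The dependency graph `Φ(F)` of a system `F` of local functions. -/
def Phi {n : ℕ} (F : Fin n → ((Fin n → ZMod 2) → (Fin n → ZMod 2))) :
    SimpleGraph (Fin n) where
  Adj i j := i ≠ j ∧ NotDep (fun x => F i x i) j ∧ NotDep (fun x => F j x j) i
  symm := by constructor; intro i j h; exact ⟨h.1.symm, h.2.2, h.2.1⟩
  loopless := by constructor; intro i h; exact h.1 rfl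

/-- The system `f = (f¹, f², f³)` on `F₂³` with `f¹(x) = (x₂x₃, x₂, x₃)`,
`f²(x) = (x₁, x₁x₃, x₃)`, `f³(x) = (x₁, x₂, 0)`. -/
def ex18 : Fin 3 → ((Fin 3 → ZMod 2) → (Fin 3 → ZMod 2)) :=
  ![fun x => ![x 1 * x 2, x 1, x 2],
    fun x => ![x 0, x 0 * x 2, x 2],
    fun x => ![x 0, x 1, 0]]

lemma swap_eq {n t : ℕ} {G : SimpleGraph (Fin n)} (hG : ∀ i j, ¬ G.Adj i j)
    {w w' : Fin t → Fin n} (h : SwapRel G w w') : w = w' := by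
  obtain ⟨k, k', -, heq, rfl⟩ := h
  rcases heq with heq | hadj
  · funext m
    simp only [Function.comp]
    by_cases h1 : m = k
    · simp [h1, Equiv.swap_apply_left, heq]
    · by_cases h2 : m = k'
      · simp [h2, Equiv.swap_apply_right, heq]
      · simp [Equiv.swap_apply_of_ne_of_ne h1 h2]
  · exact absurd hadj (hG _ _)

lemma eqvgen_eq {n t : ℕ} {G : SimpleGraph (Fin n)} (hG : ∀ i j, ¬ G.Adj i j)
    {w w' : Fin t → Fin n} (h : Relation.EqvGen (SwapRel G) w w') : w = w' := by
  induction h with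
  | rel _ _ h => exact swap_eq hG h
  | refl => rfl
  | symm _ _ _ ih => exact ih.symm
  | trans _ _ _ _ _ ih1 ih2 => exact ih1.trans ih2

lemma noedge18 : ∀ i j : Fin 3, ¬ (Phi ex18).Adj i j := by
  intro i j
  show ¬ (i ≠ j ∧ NotDep (fun x => ex18 i x i) j ∧ NotDep (fun x => ex18 j x j) i)
  unfold NotDep ex18
  revert i j
  decide

/-- The upper bound is not sharp in general: for the system `ex18`, the dependency graph
`Φ(f)` has no edges, the words `(3,2,1)` and `(3,1,2)` are inequivalent under the swap
relation, yet `f¹ ∘ f² ∘ f³ = f² ∘ f¹ ∘ f³` is the constant zero map. -/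
theorem stmt_18 :
    (∀ i j : Fin 3, ¬ (Phi ex18).Adj i j) ∧
    ¬ Relation.EqvGen (SwapRel (Phi ex18)) ![2, 1, 0] ![2, 0, 1] ∧
    (ex18 0 ∘ ex18 1 ∘ ex18 2 = fun _ _ => 0) ∧
    ex18 0 ∘ ex18 1 ∘ ex18 2 = ex18 1 ∘ ex18 0 ∘ ex18 2 := by
  refine ⟨noedge18, ?_, ?_, ?_⟩
  · intro h
    have := congrFun (eqvgen_eq noedge18 h) 1
    simp at this
  · funext x k
    unfold ex18
    simp only [Function.comp]
    fin_cases k <;> simp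
  · funext x k
    unfold ex18
    simp only [Function.comp]
    fin_cases k <;> simp
end
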